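/- Let θ, η, α, γ be inner functions and a₁, a₂ ∈ 𝒢H̄∞ with θ = a₁·η·ā₁⁻¹ and α = a₂·γ·ā₂⁻¹. Then for every φ ∈ L∞, setting φ̃ = ā₂·φ·a₁, the operators D_{ā₂⁻¹}^{γ,α} and D_{a₁⁻¹}^{θ,η} are bounded and invertible and D_φ^{θ,α} = D_{ā₂⁻¹}^{γ,α} ∘ D_{φ̃}^{η,γ} ∘ D_{a₁⁻¹}^{θ,η}; in particular, D_φ^{θ,α} is equivalent to D_{φ̃}^{η,γ}. -/

import Mathlib

open MeasureTheory

noncomputable section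

/-! ## Setup: the circle, L², L∞, multiplication operators, Hardy space,
model spaces, and generalized Toeplitz operators -/

instance : Fact (0 < 2 * Real.pi) := ⟨by positivity⟩

/-- The normalized Lebesgue (Haar) measure `dθ/2π` on the circle. -/
abbrev μH : Measure (AddCircle (2 * Real.pi)) := AddCircle.haarAddCircle

/-- The Lebesgue space `L²` of the circle. -/
abbrev L2 : Type := Lp ℂ 2 μH

/-- The space `L∞` of essentially bounded functions on the circle. -/
abbrev Linf : Type := Lp ℂ ⊤ μH

/-- Pointwise (a.e.) multiplication on `L∞`. -/
instance : Mul Linf :=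
  ⟨fun f g => ((Lp.memLp g).smul (r := ⊤) (Lp.memLp f)).toLp (⇑f • ⇑g)⟩

/-- The constant function `1` as an element of `L∞`. -/
instance : One Linf := ⟨(memLp_const (1 : ℂ)).toLp (fun _ => (1 : ℂ))⟩

/-- Complex conjugation on `L∞`. -/
instance : Star Linf :=
  ⟨fun f => ((Complex.conjCLE.toContinuousLinearMap).comp_memLp' (Lp.memLp f)).toLp
    ((starRingEnd ℂ) ∘ ⇑f)⟩

/-- Multiplication of an `L²` function by an `L∞` function. -/
def mulFun (φ : Linf) (f : L2) : L2 :=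
  ((Lp.memLp f).smul (r := 2) (Lp.memLp φ)).toLp (⇑φ • ⇑f)

lemma mulFun_coe (φ : Linf) (f : L2) : mulFun φ f =ᵐ[μH] ⇑φ • ⇑f :=
  MemLp.coeFn_toLp _

lemma mulFun_norm_le (φ : Linf) (f : L2) : ‖mulFun φ f‖ ≤ ‖φ‖ * ‖f‖ := by
  rw [mulFun, Lp.norm_toLp, Lp.norm_def, Lp.norm_def, ← ENNReal.toReal_mul]
  refine ENNReal.toReal_mono ?_ ?_
  · exact ENNReal.mul_ne_top (Lp.eLpNorm_ne_top φ) (Lp.eLpNorm_ne_top f)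
  · exact eLpNorm_smul_le_eLpNorm_top_mul_eLpNorm 2 (Lp.aestronglyMeasurable f) ⇑φ

/-- The bounded multiplication operator `M_φ : L² → L²` for `φ ∈ L∞`. -/
def mulCLM (φ : Linf) : L2 →L[ℂ] L2 :=
  LinearMap.mkContinuous
    { toFun := mulFun φ
      map_add' := by
        intro f g
        apply Lp.ext
        filter_upwards [mulFun_coe φ (f + g), mulFun_coe φ f, mulFun_coe φ g,
          Lp.coeFn_add f g, Lp.coeFn_add (mulFun φ f) (mulFun φ g)] with x h1 h2 h3 h4 h5
        simp only [Pi.smul_apply', Pi.add_apply] at *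
        rw [h1, h5, h2, h3, h4]
        exact smul_add _ _ _
      map_smul' := by
        intro c f
        apply Lp.ext
        filter_upwards [mulFun_coe φ (c • f), mulFun_coe φ f,
          Lp.coeFn_smul c f, Lp.coeFn_smul c (mulFun φ f)] with x h1 h2 h3 h4
        simp only [Pi.smul_apply', Pi.smul_apply, RingHom.id_apply] at *
        rw [h1, h4, h2, h3]
        exact smul_comm _ _ _ }
    ‖φ‖ (mulFun_norm_le φ)

/-- The image `a·K = {a f : f ∈ K}` of a subspace `K ⊆ L²` under multiplication by `a ∈ L∞`. -/
def smulSub (a : Linf) (K : Submodule ℂ L2) : Submodule ℂ L2 :=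
  K.map (mulCLM a : L2 →ₗ[ℂ] L2)

/-- The Hardy space `H² = {f ∈ L² : f̂(n) = 0 for n < 0}`. -/
def Hardy : Submodule ℂ L2 where
  carrier := {f | ∀ n : ℤ, n < 0 → fourierBasis.repr f n = 0}
  add_mem' := by
    intro f g hf hg n hn
    rw [map_add, lp.coeFn_add, Pi.add_apply, hf n hn, hg n hn, add_zero]
  zero_mem' := by
    intro n hn
    rw [map_zero, lp.coeFn_zero]
    rfl
  smul_mem' := by
    intro c f hf n hn
    rw [_root_.map_smul, lp.coeFn_smul, Pi.smul_apply, hf n hn, smul_zero]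

lemma hardy_isClosed : IsClosed (Hardy : Set L2) := by
  have h : (Hardy : Set L2) =
      ⋂ n : {m : ℤ // m < 0}, {f : L2 | fourierBasis.repr f n.1 = 0} := by
    ext f
    constructor
    · intro hf
      exact Set.mem_iInter.2 fun n => hf n.1 n.2
    · intro hf n hn
      exact Set.mem_iInter.1 hf ⟨n, hn⟩
  rw [h]
  refine isClosed_iInter fun n => isClosed_eq ?_ continuous_const
  have : (fun f : L2 => fourierBasis.repr f n.1) =
      fun f : L2 => (innerSL ℂ (fourierBasis n.1)) f := by
    funext f
    exact fourierBasis.repr_apply_apply f n.1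
  rw [this]
  exact (innerSL ℂ (fourierBasis n.1)).continuous

instance : CompleteSpace Hardy := hardy_isClosed.completeSpace_coe

/-- The model space `K_θ = H² ⊖ θH² = H² ∩ (θH²)^⊥`. -/
def modelSpace (θ : Linf) : Submodule ℂ L2 :=
  Hardy ⊓ (smulSub θ Hardy)ᗮ

instance (θ : Linf) : CompleteSpace (modelSpace θ) := by
  suffices hc : IsClosed (modelSpace θ : Set L2) from IsClosed.completeSpace_coe (hs := hc)
  have h : (modelSpace θ : Set L2) = (Hardy : Set L2) ∩ ((smulSub θ Hardy)ᗮ : Set L2) := rfl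
  rw [h]
  exact hardy_isClosed.inter (smulSub θ Hardy).isClosed_orthogonal

/-- The generalized Toeplitz operator `T_φ^{H₁,H₂} = P_{H₂} M_φ |_{H₁}`. -/
def genToeplitz (φ : Linf) (H₁ H₂ : Submodule ℂ L2) [CompleteSpace H₂] : H₁ →L[ℂ] H₂ :=
  (H₂.orthogonalProjectionOnto).comp ((mulCLM φ).comp H₁.subtypeL)

/-- The orthogonal projection of `L²` onto `H`, viewed as an operator `L² → L²`. -/
def projL (H : Submodule ℂ L2) [CompleteSpace H] : L2 →L[ℂ] L2 :=
  H.subtypeL.comp (H.orthogonalProjectionOnto)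

/-- `φ ∈ H∞`: all negative Fourier coefficients of `φ` vanish. -/
def IsHardyInf (φ : Linf) : Prop := ∀ n : ℤ, n < 0 → fourierCoeff (⇑φ) n = 0

/-- `θ` is an inner function: `θ ∈ H∞` and `|θ| = 1` a.e. on the circle. -/
def IsInner (θ : Linf) : Prop :=
  IsHardyInf θ ∧ ∀ᵐ x ∂μH, ‖(θ : AddCircle (2 * Real.pi) → ℂ) x‖ = 1

/-- `a ∈ 𝒢H∞` with explicit inverse `b ∈ H∞`. -/
def GHinfPair (a b : Linf) : Prop := IsHardyInf a ∧ IsHardyInf b ∧ a * b = 1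

/-- `a ∈ 𝒢H∞`: `a` is invertible in the algebra `H∞`. -/
def IsGHinf (a : Linf) : Prop := ∃ b, GHinfPair a b

/-- `b ∈ 𝒢H̄∞`: `b` is the conjugate of an element of `𝒢H∞`. -/
def IsGHinfBar (b : Linf) : Prop := ∃ c, IsGHinf c ∧ b = star c

/-- `a ∈ 𝒢L∞` with explicit inverse `b`. -/
def GLinfPair (a b : Linf) : Prop := a * b = 1 ∧ b * a = 1

/-- `a ∈ 𝒢L∞`: `a` is invertible in the algebra `L∞`. -/
def IsGLinf (a : Linf) : Prop := ∃ b, GLinfPair a b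

/-- The kernel of an operator between subspaces of `L²`, viewed as a subspace of `L²`. -/
def subKer {K₁ K₂ : Submodule ℂ L2} (T : K₁ →L[ℂ] K₂) : Submodule ℂ L2 :=
  (LinearMap.ker (T : K₁ →ₗ[ℂ] K₂)).map K₁.subtype

/-- The range of an operator between subspaces of `L²`, viewed as a subspace of `L²`. -/
def subRan {K₁ K₂ : Submodule ℂ L2} (T : K₁ →L[ℂ] K₂) : Submodule ℂ L2 :=
  (LinearMap.range (T : K₁ →ₗ[ℂ] K₂)).map K₂.subtype

/-- The image of a subspace `S ⊆ K₁` under `T : K₁ → K₂`, viewed as a subspace of `L²`. -/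
def opImage {K₁ K₂ : Submodule ℂ L2} (T : K₁ →L[ℂ] K₂) (S : Submodule ℂ K₁) :
    Submodule ℂ L2 :=
  (S.map (T : K₁ →ₗ[ℂ] K₂)).map K₂.subtype

section Antilinear

variable {E : Type*} [NormedAddCommGroup E] [InnerProductSpace ℂ E]

/-- `C` is antilinear: `C(f + a g) = C f + ā C g`. -/
def IsAntilinearMap (C : E → E) : Prop :=
  ∀ (f g : E) (a : ℂ), C (f + a • g) = C f + (starRingEnd ℂ a) • C g

/-- `Cs` is the antilinear adjoint of `C`: `⟨C f, g⟩ = conj ⟨f, Cs g⟩`. -/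
def IsAntilinearAdjointOf (C Cs : E → E) : Prop :=
  ∀ f g : E, (inner ℂ (C f) g : ℂ) = (starRingEnd ℂ) (inner ℂ f (Cs g) : ℂ)

/-- `C` is an antilinear unitary: it is antilinear and its antilinear adjoint is its inverse. -/
def IsAntilinearUnitary (C : E → E) : Prop :=
  IsAntilinearMap C ∧ ∃ Cs : E → E, IsAntilinearAdjointOf C Cs ∧
    Function.LeftInverse Cs C ∧ Function.RightInverse Cs C

/-- `T` is complex selfadjoint with respect to `C` (with inverse `Cinv`): `C T C⁻¹ = T*`. -/
def IsComplexSelfadjointWith [CompleteSpace E] (T : E →L[ℂ] E) (C Cinv : E → E) : Prop :=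
  ∀ f : E, C (T (Cinv f)) = ContinuousLinearMap.adjoint T f

end Antilinear

/-!
Write `a₁ = c̄` with `c ∈ 𝒢H∞`, so that `ā₁` and `b̄₁ = c⁻¹` lie in `H∞`. For `f ∈ K_η` and
`h ∈ H²`, `⟨θ h, b̄₁ f⟩ = ⟨η (b̄₁ h), f⟩ = 0` because `b₁ θ = η b̄₁`; hence multiplication by `b̄₁`
maps `K_η` into `K_θ`, symmetrically `ā₁` maps `K_θ` into `K_η`, and taking adjoints, `b₁` maps
`K_θ^⊥` into `K_η^⊥` and `a₁` maps `K_η^⊥` into `K_θ^⊥` (likewise for `a₂, b₂, γ, α`). These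
invariances make the intermediate projection in each product of two dual truncated Toeplitz
operators drop out, so the product has the product symbol; the factorisation and the inverses
`D_{ā₂}^{α,γ}` and `D_{a₁}^{η,θ}` follow.
-/

namespace Linf

lemma coeFn_mul (f g : Linf) : ⇑(f * g) =ᵐ[μH] fun x => f x * g x :=
  MemLp.coeFn_toLp _

lemma coeFn_one : ⇑(1 : Linf) =ᵐ[μH] fun _ => (1 : ℂ) :=
  MemLp.coeFn_toLp _

lemma coeFn_star (f : Linf) : ⇑(star f) =ᵐ[μH] fun x => starRingEnd ℂ (f x) :=
  MemLp.coeFn_toLp _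

instance : CommMonoid Linf where
  mul_assoc f g h := Lp.ext <| by
    filter_upwards [coeFn_mul (f * g) h, coeFn_mul f (g * h), coeFn_mul f g, coeFn_mul g h]
      with x h₁ h₂ h₃ h₄
    rw [h₁, h₂, h₃, h₄, mul_assoc]
  one_mul f := Lp.ext <| by
    filter_upwards [coeFn_mul 1 f, coeFn_one] with x h₁ h₂
    rw [h₁, h₂, one_mul]
  mul_one f := Lp.ext <| by
    filter_upwards [coeFn_mul f 1, coeFn_one] with x h₁ h₂
    rw [h₁, h₂, mul_one]
  mul_comm f g := Lp.ext <| by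
    filter_upwards [coeFn_mul f g, coeFn_mul g f] with x h₁ h₂
    rw [h₁, h₂, mul_comm]

protected lemma star_star (f : Linf) : star (star f) = f := Lp.ext <| by
  filter_upwards [coeFn_star (star f), coeFn_star f] with x h₁ h₂
  rw [h₁, h₂, Complex.conj_conj]

protected lemma star_mul (f g : Linf) : star (f * g) = star f * star g := Lp.ext <| by
  filter_upwards [coeFn_star (f * g), coeFn_mul f g, coeFn_mul (star f) (star g),
    coeFn_star f, coeFn_star g] with x h₁ h₂ h₃ h₄ h₅
  rw [h₁, h₂, h₃, h₄, h₅, map_mul]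

protected lemma star_one : star (1 : Linf) = 1 := Lp.ext <| by
  filter_upwards [coeFn_star 1, coeFn_one] with x h₁ h₂
  rw [h₁, h₂, map_one]

end Linf

local notation "⟪" x ", " y "⟫" => @inner ℂ _ _ x y

lemma mulCLM_coe (φ : Linf) (f : L2) : ⇑(mulCLM φ f) =ᵐ[μH] fun x => φ x * f x :=
  mulFun_coe φ f

lemma mulCLM_mul (φ ψ : Linf) : mulCLM (φ * ψ) = (mulCLM φ).comp (mulCLM ψ) := by
  ext1 f
  refine Lp.ext ?_
  filter_upwards [mulCLM_coe (φ * ψ) f, mulCLM_coe φ (mulCLM ψ f), mulCLM_coe ψ f,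
    Linf.coeFn_mul φ ψ] with x h₁ h₂ h₃ h₄
  rw [ContinuousLinearMap.comp_apply, h₁, h₂, h₃, h₄, mul_assoc]

lemma mulCLM_one : mulCLM 1 = ContinuousLinearMap.id ℂ L2 := by
  ext1 f
  refine Lp.ext ?_
  filter_upwards [mulCLM_coe 1 f, Linf.coeFn_one] with x h₁ h₂
  rw [ContinuousLinearMap.id_apply, h₁, h₂, one_mul]

lemma inner_mulCLM_left (φ : Linf) (u v : L2) :
    ⟪mulCLM φ u, v⟫ = ⟪u, mulCLM (star φ) v⟫ := by
  rw [L2.inner_def, L2.inner_def]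
  refine integral_congr_ae ?_
  filter_upwards [mulCLM_coe φ u, mulCLM_coe (star φ) v, Linf.coeFn_star φ] with x h₁ h₂ h₃
  simp only [RCLike.inner_apply, h₁, h₂, h₃, map_mul]
  ring

lemma fourierBasis_repr_mulCLM_star (d : Linf) (n m : ℤ) :
    fourierBasis.repr (mulCLM (star d) (fourierBasis n)) m =
      starRingEnd ℂ (fourierCoeff d (n - m)) := by
  have hcoe : ⇑(mulCLM (star d) (fourierBasis n)) =ᵐ[μH]
      fun x => starRingEnd ℂ (d x) * fourier n x := by
    filter_upwards [mulCLM_coe (star d) (fourierBasis n), Linf.coeFn_star d,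
      coe_fourierBasis (T := 2 * Real.pi) ▸ coeFn_fourierLp 2 n] with x h₁ h₂ h₃
    rw [h₁, h₂, h₃]
  rw [fourierBasis_repr, fourierCoeff_congr_ae hcoe, fourierCoeff, fourierCoeff,
    ← integral_conj]
  refine integral_congr_ae (Filter.Eventually.of_forall fun x => ?_)
  have hchar : fourier (T := 2 * Real.pi) (-m) x * fourier n x = fourier (n - m) x := by
    rw [← fourier_add, neg_add_eq_sub]
  simp only [smul_eq_mul, map_mul, fourier_neg, Complex.conj_conj, ← hchar]
  ring

lemma mulCLM_mem_hardy {d : Linf} (hd : IsHardyInf d) {f : L2} (hf : f ∈ Hardy) :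
    mulCLM d f ∈ Hardy := by
  intro n hn
  set g := mulCLM (star d) (fourierBasis n)
  have hterm : ∀ m : ℤ, ⟪g, fourierBasis m⟫ * ⟪fourierBasis m, f⟫ = 0 := by
    intro m
    rcases lt_or_ge m 0 with hm | hm
    · rw [← fourierBasis.repr_apply_apply, hf m hm, mul_zero]
    · rw [← inner_conj_symm, ← fourierBasis.repr_apply_apply, fourierBasis_repr_mulCLM_star,
        hd (n - m) (by omega), map_zero, map_zero, zero_mul]
  rw [fourierBasis.repr_apply_apply, ← inner_conj_symm, inner_mulCLM_left, inner_conj_symm]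
  exact (fourierBasis.hasSum_inner_mul_inner g f).unique
    (by simpa only [hterm] using hasSum_zero)

lemma mapsTo_mulCLM_star_modelSpace {a b : Linf} (hb : IsHardyInf (star b)) (hba : b * a = 1)
    (η : Linf) : Set.MapsTo (mulCLM (star b)) (modelSpace η) (modelSpace (a * η * star b)) := by
  rintro f ⟨hfH, hfη⟩
  refine ⟨mulCLM_mem_hardy hb hfH, ?_⟩
  rw [SetLike.mem_coe, smulSub, Submodule.mem_orthogonal]
  rintro _ ⟨h, hh, rfl⟩
  have hcancel : b * (a * η * star b) = η * star b := by
    rw [← mul_assoc, ← mul_assoc, hba, one_mul]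
  rw [ContinuousLinearMap.coe_coe, ← inner_mulCLM_left, ← ContinuousLinearMap.comp_apply,
    ← mulCLM_mul, hcancel, mulCLM_mul, ContinuousLinearMap.comp_apply]
  exact hfη _ (Submodule.mem_map_of_mem (mulCLM_mem_hardy hb hh))

lemma mapsTo_mulCLM_orthogonal {K L : Submodule ℂ L2} {u : Linf}
    (h : Set.MapsTo (mulCLM (star u)) K L) : Set.MapsTo (mulCLM u) Lᗮ Kᗮ := by
  intro f hf g hg
  rw [← Linf.star_star u, ← inner_mulCLM_left]
  exact hf _ (h hg)

section genToeplitz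

variable {H₁ H₂ H₃ : Submodule ℂ L2}

lemma genToeplitz_one (H : Submodule ℂ L2) [CompleteSpace H] :
    genToeplitz 1 H H = ContinuousLinearMap.id ℂ H := by
  ext1 f
  simp only [genToeplitz, mulCLM_one, ContinuousLinearMap.comp_apply,
    ContinuousLinearMap.id_apply, Submodule.subtypeL_apply,
    Submodule.orthogonalProjectionOnto_mem_subspace_eq_self]

lemma genToeplitz_comp_of_mapsTo [CompleteSpace H₂] [CompleteSpace H₃] (φ ψ : Linf)
    (h : Set.MapsTo (mulCLM ψ) H₁ H₂) :
    (genToeplitz φ H₂ H₃).comp (genToeplitz ψ H₁ H₂) = genToeplitz (φ * ψ) H₁ H₃ := by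
  ext1 f
  have hψf : (genToeplitz ψ H₁ H₂ f : L2) = mulCLM ψ f :=
    Submodule.starProjection_eq_self_iff.mpr (h f.2)
  show H₃.orthogonalProjectionOnto (mulCLM φ (genToeplitz ψ H₁ H₂ f)) =
    H₃.orthogonalProjectionOnto (mulCLM (φ * ψ) f)
  rw [hψf, mulCLM_mul, ContinuousLinearMap.comp_apply]

/-- The part of `ψ f` that the middle projection discards lies in `K`, which `φ` maps into
`L`, where the outer projection kills it. -/
lemma genToeplitz_orthogonal_comp {K L : Submodule ℂ L2} [CompleteSpace K] (φ ψ : Linf)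
    (h : Set.MapsTo (mulCLM φ) K L) :
    (genToeplitz φ Kᗮ Lᗮ).comp (genToeplitz ψ H₁ Kᗮ) = genToeplitz (φ * ψ) H₁ Lᗮ := by
  ext1 f
  set y := mulCLM ψ f
  have hdec : (Kᗮ.orthogonalProjectionOnto y : L2) = y - K.orthogonalProjectionOnto y :=
    eq_sub_of_add_eq' (Submodule.starProjection_add_starProjection_orthogonal y)
  have hkill : Lᗮ.orthogonalProjectionOnto (mulCLM φ (K.orthogonalProjectionOnto y)) = 0 :=
    Submodule.orthogonalProjectionOnto_apply_of_mem_orthogonal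
      (L.le_orthogonal_orthogonal (h (Submodule.coe_mem _)))
  show Lᗮ.orthogonalProjectionOnto (mulCLM φ (Kᗮ.orthogonalProjectionOnto y)) =
    Lᗮ.orthogonalProjectionOnto (mulCLM (φ * ψ) f)
  rw [hdec, map_sub, map_sub, hkill, sub_zero, mulCLM_mul, ContinuousLinearMap.comp_apply]

end genToeplitz

lemma IsGHinfBar.isHardyInf_star {a b : Linf} (ha : IsGHinfBar a) (hab : GLinfPair a b) :
    IsHardyInf (star a) ∧ IsHardyInf (star b) := by
  obtain ⟨c, ⟨d, hc, hd, hcd⟩, rfl⟩ := ha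
  have hb : b = star d :=
    left_inv_eq_right_inv hab.2 (by rw [← Linf.star_mul, hcd, Linf.star_one])
  rw [Linf.star_star, hb, Linf.star_star]
  exact ⟨hc, hd⟩

lemma eq_mul_mul_star_of_eq {a b θ η : Linf} (hab : a * b = 1) (h : θ = a * η * star b) :
    η = b * θ * star a :=
  calc η = (a * b) * η * star (a * b) := by rw [hab, Linf.star_one, one_mul, mul_one]
    _ = b * θ * star a := by rw [h, Linf.star_mul]; ac_rfl

theorem statement19_general (θ η α γ : Linf)
    (a₁ b₁ a₂ b₂ : Linf)
    (hbar₁ : IsGHinfBar a₁) (hbar₂ : IsGHinfBar a₂)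
    (h₁ : GLinfPair a₁ b₁) (h₂ : GLinfPair a₂ b₂)
    (hθη : θ = a₁ * η * star b₁) (hαγ : α = a₂ * γ * star b₂) (φ : Linf) :
    genToeplitz φ (modelSpace θ)ᗮ (modelSpace α)ᗮ =
      (genToeplitz (star b₂) (modelSpace γ)ᗮ (modelSpace α)ᗮ).comp
        ((genToeplitz (star a₂ * φ * a₁) (modelSpace η)ᗮ (modelSpace γ)ᗮ).comp
          (genToeplitz b₁ (modelSpace θ)ᗮ (modelSpace η)ᗮ)) ∧
    (∃ E' : (modelSpace α)ᗮ →L[ℂ] (modelSpace γ)ᗮ,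
      (genToeplitz (star b₂) (modelSpace γ)ᗮ (modelSpace α)ᗮ).comp E' =
        ContinuousLinearMap.id ℂ (modelSpace α)ᗮ ∧
      E'.comp (genToeplitz (star b₂) (modelSpace γ)ᗮ (modelSpace α)ᗮ) =
        ContinuousLinearMap.id ℂ (modelSpace γ)ᗮ) ∧
    (∃ F' : (modelSpace η)ᗮ →L[ℂ] (modelSpace θ)ᗮ,
      (genToeplitz b₁ (modelSpace θ)ᗮ (modelSpace η)ᗮ).comp F' =
        ContinuousLinearMap.id ℂ (modelSpace η)ᗮ ∧
      F'.comp (genToeplitz b₁ (modelSpace θ)ᗮ (modelSpace η)ᗮ) =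
        ContinuousLinearMap.id ℂ (modelSpace θ)ᗮ) := by
  obtain ⟨ha₁, hb₁⟩ := hbar₁.isHardyInf_star h₁
  obtain ⟨ha₂, hb₂⟩ := hbar₂.isHardyInf_star h₂
  have hγ_α : Set.MapsTo (mulCLM (star b₂)) (modelSpace γ) (modelSpace α) :=
    hαγ ▸ mapsTo_mulCLM_star_modelSpace hb₂ h₂.2 γ
  have hα_γ : Set.MapsTo (mulCLM (star a₂)) (modelSpace α) (modelSpace γ) :=
    (eq_mul_mul_star_of_eq h₂.1 hαγ).symm ▸ mapsTo_mulCLM_star_modelSpace ha₂ h₂.1 α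
  have hθη_perp : Set.MapsTo (mulCLM b₁) (modelSpace θ)ᗮ (modelSpace η)ᗮ :=
    mapsTo_mulCLM_orthogonal (hθη ▸ mapsTo_mulCLM_star_modelSpace hb₁ h₁.2 η)
  have hηθ_perp : Set.MapsTo (mulCLM a₁) (modelSpace η)ᗮ (modelSpace θ)ᗮ :=
    mapsTo_mulCLM_orthogonal
      ((eq_mul_mul_star_of_eq h₁.1 hθη).symm ▸ mapsTo_mulCLM_star_modelSpace ha₁ h₁.1 θ)
  have hφ : star b₂ * (star a₂ * φ * a₁ * b₁) = φ :=
    calc star b₂ * (star a₂ * φ * a₁ * b₁) = star (a₂ * b₂) * φ * (a₁ * b₁) := by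
          rw [Linf.star_mul]; ac_rfl
      _ = φ := by rw [h₂.1, h₁.1, Linf.star_one, one_mul, mul_one]
  refine ⟨?_, ⟨genToeplitz (star a₂) _ _, ?_, ?_⟩, ⟨genToeplitz a₁ _ _, ?_, ?_⟩⟩
  · rw [genToeplitz_comp_of_mapsTo _ _ hθη_perp, genToeplitz_orthogonal_comp _ _ hγ_α, hφ]
  · rw [genToeplitz_orthogonal_comp _ _ hγ_α, ← Linf.star_mul, h₂.2, Linf.star_one,
      genToeplitz_one]
  · rw [genToeplitz_orthogonal_comp _ _ hα_γ, ← Linf.star_mul, h₂.1, Linf.star_one,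
      genToeplitz_one]
  · rw [genToeplitz_comp_of_mapsTo _ _ hηθ_perp, h₁.2, genToeplitz_one]
  · rw [genToeplitz_comp_of_mapsTo _ _ hθη_perp, h₁.1, genToeplitz_one]

/-- Theorem 7.1: if `θ = a₁ η ā₁⁻¹` and `α = a₂ γ ā₂⁻¹` with
`a₁, a₂ ∈ 𝒢H̄∞` (inverses `b₁, b₂`), then for any `φ ∈ L∞`, with `φ̃ = ā₂ φ a₁`,
the operators `D_{ā₂⁻¹}^{γ,α}` and `D_{a₁⁻¹}^{θ,η}` are bounded invertible and
`D_φ^{θ,α} = D_{ā₂⁻¹}^{γ,α} D_{φ̃}^{η,γ} D_{a₁⁻¹}^{θ,η}`; in particular `D_φ^{θ,α}`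
is equivalent to `D_{φ̃}^{η,γ}`. -/
theorem statement19 (θ η α γ : Linf)
    (hθ : IsInner θ) (hη : IsInner η) (hα : IsInner α) (hγ : IsInner γ)
    (a₁ b₁ a₂ b₂ : Linf)
    (hbar₁ : IsGHinfBar a₁) (hbar₂ : IsGHinfBar a₂)
    (h₁ : GLinfPair a₁ b₁) (h₂ : GLinfPair a₂ b₂)
    (hθη : θ = a₁ * η * star b₁) (hαγ : α = a₂ * γ * star b₂) (φ : Linf) :
    genToeplitz φ (modelSpace θ)ᗮ (modelSpace α)ᗮ =
      (genToeplitz (star b₂) (modelSpace γ)ᗮ (modelSpace α)ᗮ).comp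
        ((genToeplitz (star a₂ * φ * a₁) (modelSpace η)ᗮ (modelSpace γ)ᗮ).comp
          (genToeplitz b₁ (modelSpace θ)ᗮ (modelSpace η)ᗮ)) ∧
    (∃ E' : (modelSpace α)ᗮ →L[ℂ] (modelSpace γ)ᗮ,
      (genToeplitz (star b₂) (modelSpace γ)ᗮ (modelSpace α)ᗮ).comp E' =
        ContinuousLinearMap.id ℂ (modelSpace α)ᗮ ∧
      E'.comp (genToeplitz (star b₂) (modelSpace γ)ᗮ (modelSpace α)ᗮ) =
        ContinuousLinearMap.id ℂ (modelSpace γ)ᗮ) ∧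
    (∃ F' : (modelSpace η)ᗮ →L[ℂ] (modelSpace θ)ᗮ,
      (genToeplitz b₁ (modelSpace θ)ᗮ (modelSpace η)ᗮ).comp F' =
        ContinuousLinearMap.id ℂ (modelSpace η)ᗮ ∧
      F'.comp (genToeplitz b₁ (modelSpace θ)ᗮ (modelSpace η)ᗮ) =
        ContinuousLinearMap.id ℂ (modelSpace θ)ᗮ) :=
  statement19_general θ η α γ a₁ b₁ a₂ b₂ hbar₁ hbar₂ h₁ h₂ hθη hαγ φ
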